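/- arXiv:2501.03552 — 7 statements merged into one kernel-verified Lean document; each statement's English description precedes it below -/
import Mathlib

section
/- Let m be a natural number, let b₀, b₁, …, b_m : ℝ → ℝ be differentiable, and let λ₁, …, λ_{m+1} ∈ ℝ. Suppose: (a) for each i ∈ {1,…,m} and all t ≥ 0, b_{i−1}'(t) + λ_i·b_{i−1}(t) ≥ b_i(t); (b) for all t ≥ 0, b_m'(t) + λ_{m+1}·b_m(t) ≥ 0; and (c) b_i(0) > 0 for every i ∈ {0,1,…,m}. Then b_i(t) > 0 for every i ∈ {0,1,…,m} and all t ≥ 0; in particular b₀(t) > 0 for all t ≥ 0. -/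
/-!
Multiplying by the integrating factor `exp (c t)` turns `f' + c f ≥ 0` into monotonicity of
`exp (c t) f t`, so such an `f` stays positive once it starts positive. Going down the cascade
from `b_m`, positivity of `b_i` upgrades `b_{i-1}' + λ_i b_{i-1} ≥ b_i` to `≥ 0`.
-/

open Real Set

theorem monotoneOn_exp_mul_mul_of_deriv_add_mul_nonneg {f f' : ℝ → ℝ} {a c : ℝ}
    (hf : ∀ t ∈ Ici a, HasDerivAt f (f' t) t) (h : ∀ t ∈ Ici a, 0 ≤ f' t + c * f t) :
    MonotoneOn (fun t => exp (c * t) * f t) (Ici a) := by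
  have hderiv : ∀ t ∈ Ici a,
      HasDerivAt (fun t => exp (c * t) * f t) (exp (c * t) * (f' t + c * f t)) t := by
    intro t ht
    have hexp : HasDerivAt (fun t => exp (c * t)) (exp (c * t) * c) t := by
      simpa using ((hasDerivAt_id t).const_mul c).exp
    exact (hexp.mul (hf t ht)).congr_deriv (by ring)
  refine monotoneOn_of_hasDerivWithinAt_nonneg (convex_Ici a)
    (fun t ht => (hderiv t ht).continuousAt.continuousWithinAt)
    (fun t ht => (hderiv t (interior_subset ht)).hasDerivWithinAt) fun t ht => ?_
  exact mul_nonneg (exp_pos _).le (h t (interior_subset ht))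

theorem pos_of_deriv_add_mul_nonneg {f f' : ℝ → ℝ} {a c : ℝ}
    (hf : ∀ t ∈ Ici a, HasDerivAt f (f' t) t) (h : ∀ t ∈ Ici a, 0 ≤ f' t + c * f t)
    (ha : 0 < f a) : ∀ t ∈ Ici a, 0 < f t := by
  intro t ht
  have hmono := monotoneOn_exp_mul_mul_of_deriv_add_mul_nonneg hf h self_mem_Ici ht ht
  have hprod : 0 < exp (c * t) * f t := (mul_pos (exp_pos _) ha).trans_le hmono
  exact pos_of_mul_pos_right hprod (exp_pos _).le

/-- Cascade of differential inequalities (core of Theorem 1):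
`b : Fin (m+1) → ℝ → ℝ` are the barrier functions `b₀,…,b_m`, and
`lam : Fin (m+1) → ℝ` collects `λ₁,…,λ_{m+1}` (so `lam i = λ_{i+1}`).
If `b_{i-1}' + λ_i b_{i-1} ≥ b_i` for `i ∈ [m]`, `b_m' + λ_{m+1} b_m ≥ 0`,
and all `b_i (0) > 0`, then all `b_i` stay positive on `[0,∞)`. -/
theorem stmt_2 (m : ℕ) (b b' : Fin (m + 1) → ℝ → ℝ) (lam : Fin (m + 1) → ℝ)
    (hderiv : ∀ i : Fin (m + 1), ∀ t : ℝ, HasDerivAt (b i) (b' i t) t)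
    (ha : ∀ i : Fin m, ∀ t : ℝ, t ≥ 0 →
      b' i.castSucc t + lam i.castSucc * b i.castSucc t ≥ b i.succ t)
    (hb : ∀ t : ℝ, t ≥ 0 →
      b' (Fin.last m) t + lam (Fin.last m) * b (Fin.last m) t ≥ 0)
    (hc : ∀ i : Fin (m + 1), b i 0 > 0) :
    (∀ i : Fin (m + 1), ∀ t : ℝ, t ≥ 0 → b i t > 0) ∧
      (∀ t : ℝ, t ≥ 0 → b 0 t > 0) := by
  have hpos : ∀ i : Fin (m + 1), ∀ t : ℝ, t ≥ 0 → b i t > 0 := by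
    intro i
    induction i using Fin.reverseInduction with
    | last => exact pos_of_deriv_add_mul_nonneg (fun t _ => hderiv _ t) hb (hc _)
    | cast i ih =>
      refine pos_of_deriv_add_mul_nonneg (c := lam i.castSucc) (fun t _ => hderiv _ t)
        (fun t ht => ?_) (hc _)
      linarith [ha i t ht, ih t ht]
  exact ⟨hpos, hpos 0⟩
end

section
/- Let E be a real normed vector space, let x : ℝ → E be differentiable, let h : E → ℝ be (Fréchet) differentiable, and let γ > 0. If h(x(0)) ≥ 0 and for all t ≥ 0 the Lie-derivative condition Dh(x(t))[x'(t)] + γ·h(x(t)) ≥ 0 holds (where Dh(x(t)) is the Fréchet derivative of h at x(t) and x'(t) is the derivative of x at t), then h(x(t)) ≥ 0 for all t ≥ 0. -/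
/-!
The integrating factor `exp (γ t)` turns the condition `ψ' + γ ψ ≥ 0` on `ψ = h ∘ x` into
`(ψ · exp (γ ·))' ≥ 0`, so `ψ t · exp (γ t)` is nondecreasing on `t ≥ 0` and stays above
`ψ 0 ≥ 0`.
-/

open Set

theorem HasDerivAt.mul_exp_const_mul {f : ℝ → ℝ} {f' γ t : ℝ} (hf : HasDerivAt f f' t) :
    HasDerivAt (fun s => f s * Real.exp (γ * s)) ((f' + γ * f t) * Real.exp (γ * t)) t := by
  have hexp : HasDerivAt (fun s => Real.exp (γ * s)) (Real.exp (γ * t) * γ) t :=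
    ((hasDerivAt_id t).const_mul γ).exp.congr_deriv (by simp)
  exact (hf.mul hexp).congr_deriv (by ring)

theorem monotoneOn_mul_exp_of_deriv_add_mul_nonneg {s : Set ℝ} (hs : Convex ℝ s)
    {f f' : ℝ → ℝ} {γ : ℝ} (hf : ∀ t ∈ s, HasDerivAt f (f' t) t)
    (hcond : ∀ t ∈ interior s, 0 ≤ f' t + γ * f t) :
    MonotoneOn (fun t => f t * Real.exp (γ * t)) s := by
  have hderiv : ∀ t ∈ s, HasDerivAt (fun t => f t * Real.exp (γ * t))
      ((f' t + γ * f t) * Real.exp (γ * t)) t := fun t ht => (hf t ht).mul_exp_const_mul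
  refine monotoneOn_of_deriv_nonneg hs
    (fun t ht => (hderiv t ht).continuousAt.continuousWithinAt)
    (fun t ht => (hderiv t (interior_subset ht)).differentiableAt.differentiableWithinAt)
    fun t ht => ?_
  rw [(hderiv t (interior_subset ht)).deriv]
  exact mul_nonneg (hcond t ht) (Real.exp_pos _).le

theorem nonneg_of_deriv_add_mul_nonneg {f f' : ℝ → ℝ} {γ a : ℝ}
    (hf : ∀ t ∈ Ici a, HasDerivAt f (f' t) t) (hcond : ∀ t ∈ Ioi a, 0 ≤ f' t + γ * f t)
    (ha : 0 ≤ f a) : ∀ t ∈ Ici a, 0 ≤ f t := by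
  intro t ht
  have hmono := monotoneOn_mul_exp_of_deriv_add_mul_nonneg (convex_Ici a) hf
    (by simpa only [interior_Ici] using hcond)
  have hle : f a * Real.exp (γ * a) ≤ f t * Real.exp (γ * t) := hmono self_mem_Ici ht ht
  exact nonneg_of_mul_nonneg_left ((mul_nonneg ha (Real.exp_pos _).le).trans hle)
    (Real.exp_pos _)

theorem stmt_3_general {E : Type*} [NormedAddCommGroup E] [NormedSpace ℝ E]
    (x : ℝ → E) (x' : ℝ → E) (h : E → ℝ) (Dh : E → (E →L[ℝ] ℝ)) (γ : ℝ)
    (hx : ∀ t : ℝ, HasDerivAt x (x' t) t)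
    (hh : ∀ y : E, HasFDerivAt h (Dh y) y)
    (h0 : h (x 0) ≥ 0)
    (hcond : ∀ t : ℝ, t ≥ 0 → Dh (x t) (x' t) + γ * h (x t) ≥ 0) :
    ∀ t : ℝ, t ≥ 0 → h (x t) ≥ 0 :=
  nonneg_of_deriv_add_mul_nonneg (f := fun t => h (x t))
    (fun t _ => (hh (x t)).comp_hasDerivAt t (hx t))
    (fun t ht => hcond t (le_of_lt ht)) h0

/-- CBF safety guarantee: along a trajectory `x` of a system in a normed space `E`,
if the Lie-derivative condition `Dh(x t)[x' t] + γ h(x t) ≥ 0` holds for `t ≥ 0`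
and `h (x 0) ≥ 0`, then `h (x t) ≥ 0` for all `t ≥ 0`. -/
theorem stmt_3 {E : Type*} [NormedAddCommGroup E] [NormedSpace ℝ E]
    (x : ℝ → E) (x' : ℝ → E) (h : E → ℝ) (Dh : E → (E →L[ℝ] ℝ)) (γ : ℝ)
    (hγ : γ > 0)
    (hx : ∀ t : ℝ, HasDerivAt x (x' t) t)
    (hh : ∀ y : E, HasFDerivAt h (Dh y) y)
    (h0 : h (x 0) ≥ 0)
    (hcond : ∀ t : ℝ, t ≥ 0 → Dh (x t) (x' t) + γ * h (x t) ≥ 0) :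
    ∀ t : ℝ, t ≥ 0 → h (x t) ≥ 0 :=
  stmt_3_general x x' h Dh γ hx hh h0 hcond
end

section
/- Let p ≥ 1, write ℝ^p for EuclideanSpace ℝ (Fin p), and let α > 0. Let φ, d, z, s : ℝ → ℝ^p with d, z, s differentiable, and suppose the disturbance-observer relations hold for all t: z'(t) = φ(t) + d(t) and s'(t) = −α·(φ(t) + d̂(t)), where d̂(t) := s(t) + α·z(t). Define the estimation error e_d(t) := d̂(t) − d(t). Then: (i) e_d is differentiable with e_d'(t) = −α·e_d(t) − d'(t) for all t; and (ii) if moreover ‖d'(t)‖ ≤ ω for all t ≥ 0 and 0 < ν < 2α, then with κ := α − ν/2 one has ‖e_d(t)‖² ≤ ‖e_d(0)‖²·exp(−2κ·t) + ω²/(2νκ) for all t ≥ 0. -/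
/-!
The error `e = d̂ - d` obeys `e' = -α e - d'`. Hence `V = ‖e‖²` has
`V' = 2⟪e, -α e - d'⟫ ≤ -(2α - ν) V + ‖d'‖² / ν` by Young's inequality
`2 ‖e‖ ‖d'‖ ≤ ν ‖e‖² + ‖d'‖² / ν`, and the linear comparison (Grönwall) bound for
`V' ≤ -2κ V + ω² / ν` with `2κ = 2α - ν > 0` gives the estimate.
-/

open Real Set

theorem gronwallBound_le_of_neg {δ K ε x : ℝ} (hK : K < 0) (hε : 0 ≤ ε) (hx : 0 ≤ x) :
    gronwallBound δ K ε x ≤ δ * exp (K * x) + ε / -K := by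
  rw [gronwallBound_of_K_ne_0 hK.ne]
  have hexp : exp (K * x) ≤ 1 := exp_le_one_iff.mpr (mul_nonpos_of_nonpos_of_nonneg hK.le hx)
  have hεK : 0 ≤ ε / -K := div_nonneg hε (neg_nonneg.mpr hK.le)
  calc δ * exp (K * x) + ε / K * (exp (K * x) - 1)
      = δ * exp (K * x) + ε / -K * (1 - exp (K * x)) := by rw [div_neg]; ring
    _ ≤ δ * exp (K * x) + ε / -K := by nlinarith [exp_pos (K * x)]

theorem le_mul_exp_add_div_of_hasDerivAt_le {V V' : ℝ → ℝ} {a b t : ℝ} (ha : 0 < a) (hb : 0 ≤ b)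
    (hV : ∀ x, 0 ≤ x → HasDerivAt V (V' x) x) (hV' : ∀ x, 0 ≤ x → V' x ≤ -a * V x + b)
    (ht : 0 ≤ t) :
    V t ≤ V 0 * exp (-a * t) + b / a := by
  have hcont : ContinuousOn V (Icc 0 t) := fun x hx => (hV x hx.1).continuousAt.continuousWithinAt
  have hslope : ∀ x ∈ Ico 0 t, ∀ r, V' x < r → ∃ᶠ z in nhdsWithin x (Ioi x), slope V x z < r :=
    fun x hx _ hr => (hV x hx.1).hasDerivWithinAt.liminf_right_slope_le hr
  have hgronwall := le_gronwallBound_of_liminf_deriv_right_le hcont hslope le_rfl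
    (fun x hx => hV' x hx.1) t ⟨ht, le_rfl⟩
  rw [sub_zero] at hgronwall
  simpa only [neg_neg] using hgronwall.trans (gronwallBound_le_of_neg (neg_lt_zero.mpr ha) hb ht)

section

variable {F : Type*} [NormedAddCommGroup F]

theorem hasDerivAt_observer_error [NormedSpace ℝ F] {α t : ℝ} {φ d z s : ℝ → F} {d' : F}
    (hd : HasDerivAt d d' t) (hz : HasDerivAt z (φ t + d t) t)
    (hs : HasDerivAt s (-α • (φ t + (s t + α • z t))) t) :
    HasDerivAt (fun τ => s τ + α • z τ - d τ) (-α • (s t + α • z t - d t) - d') t := by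
  refine ((hs.add (hz.const_smul α)).sub hd).congr_deriv ?_
  module

variable [InnerProductSpace ℝ F]

theorem two_mul_inner_neg_smul_sub_le {α ν : ℝ} (hν : 0 < ν) (e w : F) :
    2 * inner ℝ e (-α • e - w) ≤ -(2 * α - ν) * ‖e‖ ^ 2 + ‖w‖ ^ 2 / ν := by
  have hinner : inner ℝ e (-α • e - w) = -α * ‖e‖ ^ 2 - inner ℝ e w := by
    rw [inner_sub_right, real_inner_smul_right, real_inner_self_eq_norm_sq]
  have hcs : -inner ℝ e w ≤ ‖e‖ * ‖w‖ := by
    simpa using real_inner_le_norm e (-w)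
  have hyoung := two_mul_le_add_mul_sq (a := ‖e‖) (b := ‖w‖) hν
  rw [inv_mul_eq_div] at hyoung
  rw [hinner]
  linarith

theorem norm_sq_le_of_hasDerivAt_neg_smul_sub {e w : ℝ → F} {α ν ω t : ℝ} (hν : 0 < ν)
    (hνα : ν < 2 * α) (he : ∀ x, 0 ≤ x → HasDerivAt e (-α • e x - w x) x)
    (hw : ∀ x, 0 ≤ x → ‖w x‖ ≤ ω) (ht : 0 ≤ t) :
    ‖e t‖ ^ 2 ≤ ‖e 0‖ ^ 2 * exp (-2 * (α - ν / 2) * t) + ω ^ 2 / (2 * ν * (α - ν / 2)) := by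
  have hrate : 0 < 2 * α - ν := by linarith
  have hV' : ∀ x, 0 ≤ x →
      2 * inner ℝ (e x) (-α • e x - w x) ≤ -(2 * α - ν) * ‖e x‖ ^ 2 + ω ^ 2 / ν := by
    intro x hx
    have hw2 : ‖w x‖ ^ 2 ≤ ω ^ 2 := pow_le_pow_left₀ (norm_nonneg _) (hw x hx) 2
    have hlyap := two_mul_inner_neg_smul_sub_le (α := α) hν (e x) (w x)
    have hw2ν : ‖w x‖ ^ 2 / ν ≤ ω ^ 2 / ν := div_le_div_of_nonneg_right hw2 hν.le
    linarith
  have hbound := le_mul_exp_add_div_of_hasDerivAt_le hrate (by positivity)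
    (fun x hx => (he x hx).norm_sq) hV' ht
  have hexponent : -2 * (α - ν / 2) * t = -(2 * α - ν) * t := by ring
  have hconstant : ω ^ 2 / (2 * ν * (α - ν / 2)) = ω ^ 2 / ν / (2 * α - ν) := by
    rw [div_div]; ring_nf
  rwa [hexponent, hconstant]

end

theorem stmt_5_general (p : ℕ) (α : ℝ)
    (φ d z s d' z' s' : ℝ → EuclideanSpace ℝ (Fin p))
    (hd : ∀ t : ℝ, HasDerivAt d (d' t) t)
    (hz : ∀ t : ℝ, HasDerivAt z (z' t) t)
    (hs : ∀ t : ℝ, HasDerivAt s (s' t) t)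
    (hzeq : ∀ t : ℝ, z' t = φ t + d t)
    (hseq : ∀ t : ℝ, s' t = -α • (φ t + (s t + α • z t))) :
    (∀ t : ℝ, HasDerivAt (fun τ : ℝ => (s τ + α • z τ) - d τ)
      (-α • ((s t + α • z t) - d t) - d' t) t) ∧
    (∀ ω ν : ℝ, 0 < ν → ν < 2 * α → (∀ t : ℝ, t ≥ 0 → ‖d' t‖ ≤ ω) →
      ∀ t : ℝ, t ≥ 0 →
        ‖(s t + α • z t) - d t‖ ^ 2 ≤
          ‖(s 0 + α • z 0) - d 0‖ ^ 2 * Real.exp (-2 * (α - ν / 2) * t) +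
            ω ^ 2 / (2 * ν * (α - ν / 2))) := by
  have herror : ∀ t, HasDerivAt (fun τ => s τ + α • z τ - d τ)
      (-α • (s t + α • z t - d t) - d' t) t := fun t =>
    hasDerivAt_observer_error (hd t) (hzeq t ▸ hz t) (hseq t ▸ hs t)
  exact ⟨herror, fun ω ν hν hνα hω t ht =>
    norm_sq_le_of_hasDerivAt_neg_smul_sub hν hνα (fun x _ => herror x) hω ht⟩

/-- Disturbance observer error dynamics and Lyapunov estimate.
With `d̂ = s + α z`, `z' = φ + d`, `s' = −α (φ + d̂)`, the estimation error
`e_d = d̂ − d` satisfies `e_d' = −α e_d − d'`; and if `‖d'‖ ≤ ω` on `[0,∞)` and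
`0 < ν < 2α`, then with `κ = α − ν/2`,
`‖e_d t‖² ≤ ‖e_d 0‖² exp(−2κ t) + ω²/(2νκ)` for all `t ≥ 0`. -/
theorem stmt_5 (p : ℕ) (hp : 1 ≤ p) (α : ℝ) (hα : α > 0)
    (φ d z s d' z' s' : ℝ → EuclideanSpace ℝ (Fin p))
    (hd : ∀ t : ℝ, HasDerivAt d (d' t) t)
    (hz : ∀ t : ℝ, HasDerivAt z (z' t) t)
    (hs : ∀ t : ℝ, HasDerivAt s (s' t) t)
    (hzeq : ∀ t : ℝ, z' t = φ t + d t)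
    (hseq : ∀ t : ℝ, s' t = -α • (φ t + (s t + α • z t))) :
    (∀ t : ℝ, HasDerivAt (fun τ : ℝ => (s τ + α • z τ) - d τ)
      (-α • ((s t + α • z t) - d t) - d' t) t) ∧
    (∀ ω ν : ℝ, 0 < ν → ν < 2 * α → (∀ t : ℝ, t ≥ 0 → ‖d' t‖ ≤ ω) →
      ∀ t : ℝ, t ≥ 0 →
        ‖(s t + α • z t) - d t‖ ^ 2 ≤
          ‖(s 0 + α • z 0) - d 0‖ ^ 2 * Real.exp (-2 * (α - ν / 2) * t) +
            ω ^ 2 / (2 * ν * (α - ν / 2))) :=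
  stmt_5_general p α φ d z s d' z' s' hd hz hs hzeq hseq
end

section
/- Let p ≥ 1 and m ≥ 1, write ℝ^p for EuclideanSpace ℝ (Fin p), and fix α > 0, T₁, …, T_m > 0 and ω ≥ 0. Then there exists B ≥ 0 (depending only on α, the T_j, and ω) such that: for all differentiable functions d, g₀, g₁, …, g_m : ℝ → ℝ^p satisfying, for all t ≥ 0, (a) g₀'(t) = −α·(g₀(t) − d(t)) (disturbance-observer estimate dynamics), (b) g_j'(t) = −T_j·(g_j(t) − g_{j−1}(t)) for each j ∈ {1,…,m} (low-pass filter chain), and (c) ‖d'(t)‖ ≤ ω, the filtered disturbance estimation error δ(t) := g_m(t) − d(t) is bounded on [0,∞) and satisfies limsup_{t→∞} ‖δ(t)‖ ≤ B. -/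
/-!
Each error `e_j = g_j - d` solves a stable scalar-gain linear equation driven by a bounded input:
`e₀' = -α e₀ - d'` and `e_j' = -T_j e_j + (T_j e_{j-1} - d')`. Multiplying by `e^{ct}` shows that
a solution of `x' = -c x + u` with `‖u‖ ≤ M` obeys `‖x t‖ ≤ e^{-c(t-s)} ‖x s‖ + M / c`, so it is
bounded and ultimately bounded by `M / c`. Inducting along the chain, `e_j` is ultimately bounded
by `ω / α + ∑_{i=1}^{j} ω / T_i`.
-/

open Filter Topology

theorem Fin.partialSum_last {M : Type*} [AddCommMonoid M] {n : ℕ} (f : Fin n → M) :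
    Fin.partialSum f (Fin.last n) = ∑ i, f i := by
  rw [Fin.partialSum, Fin.val_last, List.take_of_length_le (List.length_ofFn).le, List.sum_ofFn]

section UltimateBoundedness

variable {E : Type*} [NormedAddCommGroup E]

/-- The paper's global uniform ultimate boundedness, with ultimate bound `b`. -/
def UltimatelyBounded (f : ℝ → E) (b : ℝ) : Prop :=
  (∃ C, ∀ t, 0 ≤ t → ‖f t‖ ≤ C) ∧ ∀ ε > 0, ∀ᶠ t in atTop, ‖f t‖ ≤ b + ε

namespace UltimatelyBounded

variable {f g : ℝ → E} {a b : ℝ}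

theorem of_norm_le (h : ∀ t, 0 ≤ t → ‖f t‖ ≤ b) : UltimatelyBounded f b :=
  ⟨⟨b, h⟩, fun _ hε => eventually_atTop.2
    ⟨0, fun t ht => (h t ht).trans (le_add_of_nonneg_right hε.le)⟩⟩

theorem neg (hf : UltimatelyBounded f b) : UltimatelyBounded (-f) b := by
  simpa only [UltimatelyBounded, Pi.neg_apply, norm_neg] using hf

theorem sub (hf : UltimatelyBounded f a) (hg : UltimatelyBounded g b) :
    UltimatelyBounded (f - g) (a + b) := by
  obtain ⟨⟨C, hC⟩, hf⟩ := hf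
  obtain ⟨⟨D, hD⟩, hg⟩ := hg
  refine ⟨⟨C + D, fun t ht => (norm_sub_le _ _).trans (add_le_add (hC t ht) (hD t ht))⟩,
    fun ε hε => ?_⟩
  filter_upwards [hf (ε / 2) (half_pos hε), hg (ε / 2) (half_pos hε)] with t hft hgt
  rw [Pi.sub_apply]
  linarith [norm_sub_le (f t) (g t)]

theorem limsup_norm_le (hf : UltimatelyBounded f b) : limsup (fun t => ‖f t‖) atTop ≤ b :=
  le_of_forall_pos_le_add fun ε hε =>
    limsup_le_of_le (isCoboundedUnder_le_of_le atTop fun _ => norm_nonneg _) (hf.2 ε hε)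

variable [NormedSpace ℝ E]

theorem const_smul (hf : UltimatelyBounded f b) {c : ℝ} (hc : 0 < c) :
    UltimatelyBounded (c • f) (c * b) := by
  obtain ⟨⟨C, hC⟩, hf⟩ := hf
  have hnorm (t : ℝ) : ‖(c • f) t‖ = c * ‖f t‖ := by
    rw [Pi.smul_apply, norm_smul, Real.norm_of_nonneg hc.le]
  refine ⟨⟨c * C, fun t ht => ?_⟩, fun ε hε => ?_⟩
  · rw [hnorm]
    exact mul_le_mul_of_nonneg_left (hC t ht) hc.le
  · filter_upwards [hf (ε / c) (div_pos hε hc)] with t ht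
    rw [hnorm]
    calc c * ‖f t‖ ≤ c * (b + ε / c) := mul_le_mul_of_nonneg_left ht hc.le
      _ = c * b + ε := by field_simp

end UltimatelyBounded

variable [NormedSpace ℝ E]

theorem norm_le_of_hasDerivAt_eq_neg_smul_add {c M s t : ℝ} (hc : 0 < c) {x x' u : ℝ → E}
    (hx : ∀ r, HasDerivAt x (x' r) r) (heq : ∀ r, s ≤ r → x' r = -c • x r + u r)
    (hu : ∀ r, s ≤ r → ‖u r‖ ≤ M) (hst : s ≤ t) :
    ‖x t‖ ≤ Real.exp (-(c * (t - s))) * ‖x s‖ + M / c := by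
  have hM : 0 ≤ M := (norm_nonneg _).trans (hu s le_rfl)
  have hexp (r : ℝ) : HasDerivAt (fun r => Real.exp (c * r)) (Real.exp (c * r) * c) r := by
    simpa using ((hasDerivAt_id r).const_mul c).exp
  -- `e^{cr} • x r` has derivative `e^{cr} • u r`, of norm at most `M e^{cr}`.
  have hgrowth : ‖Real.exp (c * t) • x t‖ ≤
      Real.exp (c * s) * ‖x s‖ + M / c * (Real.exp (c * t) - Real.exp (c * s)) := by
    refine image_norm_le_of_norm_deriv_right_le_deriv_boundary
      (f := fun r => Real.exp (c * r) • x r) (f' := fun r => Real.exp (c * r) • u r)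
      (B := fun r => Real.exp (c * s) * ‖x s‖ + M / c * (Real.exp (c * r) - Real.exp (c * s)))
      (B' := fun r => M * Real.exp (c * r))
      (fun r _ => ((hexp r).smul (hx r)).continuousAt.continuousWithinAt)
      (fun r hr => ?_) ?_ (fun r => ?_) (fun r hr => ?_) ⟨hst, le_rfl⟩
    · refine ((hexp r).smul (hx r)).hasDerivWithinAt.congr_deriv ?_
      rw [heq r hr.1]
      module
    · simp [norm_smul, abs_of_pos (Real.exp_pos _)]
    · refine ((((hexp r).sub_const _).const_mul (M / c)).const_add _).congr_deriv ?_
      field_simp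
    · rw [norm_smul, Real.norm_of_nonneg (Real.exp_pos _).le, mul_comm M]
      exact mul_le_mul_of_nonneg_left (hu r hr.1) (Real.exp_pos _).le
  rw [norm_smul, Real.norm_of_nonneg (Real.exp_pos _).le] at hgrowth
  have hshift : Real.exp (c * t) * Real.exp (-(c * (t - s))) = Real.exp (c * s) := by
    rw [← Real.exp_add]; ring_nf
  refine le_of_mul_le_mul_left ?_ (Real.exp_pos (c * t))
  rw [mul_add, ← mul_assoc, hshift]
  have : 0 ≤ M / c * Real.exp (c * s) := by positivity
  linarith

theorem UltimatelyBounded.of_hasDerivAt_eq_neg_smul_add {c M : ℝ} (hc : 0 < c) {x x' u : ℝ → E}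
    (hx : ∀ t, HasDerivAt x (x' t) t) (heq : ∀ t, 0 ≤ t → x' t = -c • x t + u t)
    (hu : UltimatelyBounded u M) : UltimatelyBounded x (M / c) := by
  obtain ⟨⟨C, hC⟩, hu⟩ := hu
  refine ⟨⟨‖x 0‖ + C / c, fun t ht => ?_⟩, fun ε hε => ?_⟩
  · have hexp : Real.exp (-(c * (t - 0))) ≤ 1 := Real.exp_le_one_iff.2 (by nlinarith)
    calc ‖x t‖ ≤ Real.exp (-(c * (t - 0))) * ‖x 0‖ + C / c :=
          norm_le_of_hasDerivAt_eq_neg_smul_add hc hx heq hC ht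
      _ ≤ ‖x 0‖ + C / c := by gcongr; exact mul_le_of_le_one_left (norm_nonneg _) hexp
  obtain ⟨s₀, hs₀⟩ := eventually_atTop.1 (hu (c * ε / 2) (by positivity))
  set s := max s₀ 0
  have hdecay : Tendsto (fun t => Real.exp (-(c * (t - s))) * ‖x s‖) atTop (𝓝 0) := by
    have := Real.tendsto_exp_neg_atTop_nhds_zero.comp
      ((tendsto_atTop_add_const_right atTop (-s) tendsto_id).const_mul_atTop hc)
    simpa [sub_eq_add_neg] using this.mul_const ‖x s‖
  filter_upwards [hdecay.eventually (gt_mem_nhds (half_pos hε)), eventually_ge_atTop s]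
    with t htransient hst
  have hbound := norm_le_of_hasDerivAt_eq_neg_smul_add hc hx
    (fun r hr => heq r ((le_max_right _ _).trans hr))
    (fun r hr => hs₀ r ((le_max_left _ _).trans hr)) hst
  have hsplit : (M + c * ε / 2) / c = M / c + ε / 2 := by field_simp
  linarith

end UltimateBoundedness

theorem ultimatelyBounded_sub_of_filterChain {E : Type*} [NormedAddCommGroup E]
    [NormedSpace ℝ E] {m : ℕ} {α ω : ℝ} (hα : 0 < α) {T : Fin m → ℝ} (hT : ∀ j, 0 < T j)
    {d d' : ℝ → E} {g g' : Fin (m + 1) → ℝ → E}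
    (hd : ∀ t, HasDerivAt d (d' t) t) (hg : ∀ i t, HasDerivAt (g i) (g' i t) t)
    (hg₀ : ∀ t, 0 ≤ t → g' 0 t = -α • (g 0 t - d t))
    (hgsucc : ∀ j t, 0 ≤ t → g' j.succ t = -(T j) • (g j.succ t - g j.castSucc t))
    (hd' : UltimatelyBounded d' ω) (i : Fin (m + 1)) :
    UltimatelyBounded (g i - d) (ω / α + Fin.partialSum (fun j => ω / T j) i) := by
  induction i using Fin.induction with
  | zero =>
    rw [Fin.partialSum_zero, add_zero]
    refine .of_hasDerivAt_eq_neg_smul_add hα (fun t => (hg 0 t).sub (hd t))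
      (fun t ht => ?_) hd'.neg
    rw [hg₀ t ht, Pi.sub_apply, Pi.neg_apply]
    abel
  | succ j ih =>
    have h := UltimatelyBounded.of_hasDerivAt_eq_neg_smul_add (hT j)
      (fun t => (hg j.succ t).sub (hd t)) (fun t ht => ?_) ((ih.const_smul (hT j)).sub hd')
    · convert h using 1
      rw [add_div, mul_div_cancel_left₀ _ (hT j).ne', Fin.partialSum_succ, add_assoc]
    · rw [hgsucc j t ht]
      simp only [Pi.sub_apply, Pi.smul_apply]
      module

theorem stmt_8_general (p m : ℕ)
    (α : ℝ) (hα : α > 0) (T : Fin m → ℝ) (hT : ∀ j, T j > 0)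
    (ω : ℝ) (hω : ω ≥ 0) :
    ∃ B : ℝ, B ≥ 0 ∧
      ∀ (d d' : ℝ → EuclideanSpace ℝ (Fin p))
        (g g' : Fin (m + 1) → ℝ → EuclideanSpace ℝ (Fin p)),
        (∀ t : ℝ, HasDerivAt d (d' t) t) →
        (∀ i : Fin (m + 1), ∀ t : ℝ, HasDerivAt (g i) (g' i t) t) →
        (∀ t : ℝ, t ≥ 0 → g' 0 t = -α • (g 0 t - d t)) →
        (∀ j : Fin m, ∀ t : ℝ, t ≥ 0 →
          g' j.succ t = -(T j) • (g j.succ t - g j.castSucc t)) →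
        (∀ t : ℝ, t ≥ 0 → ‖d' t‖ ≤ ω) →
        (∃ C : ℝ, ∀ t : ℝ, t ≥ 0 → ‖g (Fin.last m) t - d t‖ ≤ C) ∧
          Filter.limsup (fun t => ‖g (Fin.last m) t - d t‖) Filter.atTop ≤ B := by
  refine ⟨ω / α + ∑ j, ω / T j,
    add_nonneg (div_nonneg hω hα.le) (Finset.sum_nonneg fun j _ => div_nonneg hω (hT j).le),
    fun d d' g g' hd hg hg₀ hgsucc hd' => ?_⟩
  have h := ultimatelyBounded_sub_of_filterChain hα hT hd hg hg₀ hgsucc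
    (.of_norm_le hd') (Fin.last m)
  rw [Fin.partialSum_last] at h
  exact ⟨h.1, h.limsup_norm_le⟩

/-- Lemma 1 of the paper: the filtered disturbance estimation error
`δ = g_m − d` of the DOB (`g₀' = −α (g₀ − d)`) cascaded with low-pass filters
(`g_j' = −T_j (g_j − g_{j−1})`) is globally uniformly ultimately bounded,
with an ultimate bound `B` depending only on `α`, the `T_j` and the disturbance
derivative bound `ω`. -/
theorem stmt_8 (p m : ℕ) (hp : 1 ≤ p) (hm : 1 ≤ m)
    (α : ℝ) (hα : α > 0) (T : Fin m → ℝ) (hT : ∀ j, T j > 0)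
    (ω : ℝ) (hω : ω ≥ 0) :
    ∃ B : ℝ, B ≥ 0 ∧
      ∀ (d d' : ℝ → EuclideanSpace ℝ (Fin p))
        (g g' : Fin (m + 1) → ℝ → EuclideanSpace ℝ (Fin p)),
        (∀ t : ℝ, HasDerivAt d (d' t) t) →
        (∀ i : Fin (m + 1), ∀ t : ℝ, HasDerivAt (g i) (g' i t) t) →
        (∀ t : ℝ, t ≥ 0 → g' 0 t = -α • (g 0 t - d t)) →
        (∀ j : Fin m, ∀ t : ℝ, t ≥ 0 →
          g' j.succ t = -(T j) • (g j.succ t - g j.castSucc t)) →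
        (∀ t : ℝ, t ≥ 0 → ‖d' t‖ ≤ ω) →
        (∃ C : ℝ, ∀ t : ℝ, t ≥ 0 → ‖g (Fin.last m) t - d t‖ ≤ C) ∧
          Filter.limsup (fun t => ‖g (Fin.last m) t - d t‖) Filter.atTop ≤ B :=
  stmt_8_general p m α hα T hT ω hω
end

section
/- Let p ≥ 1 and m ≥ 1, let T₁, …, T_m > 0 and α > 0, and let A be the real square matrix of size (m+1)·p defined in (m+1)×(m+1) block form with p×p blocks as follows: the diagonal blocks are −T_j·I_p for j = 1,…,m and −α·I_p in block position (m+1, m+1); the subdiagonal blocks in positions (j+1, j) are T_j·I_p for j = 1,…,m−1; the block in position (1, m+1) is α·I_p; and all other blocks are zero. Then the characteristic polynomial of A equals (X + α)^p · ∏_{j=1}^{m} (X + T_j)^p. Consequently, every complex eigenvalue of A lies in the set {−α, −T₁, …, −T_m}, and in particular every eigenvalue of A is a negative real number. -/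
open Polynomial
open scoped Kronecker

/-!
The matrix is `B ⊗ₖ 1_p` for an `(m+1) × (m+1)` matrix `B`, so its characteristic polynomial is
`(charpoly B)^p`. The only entry of `B` off the diagonal and subdiagonal is the corner `(0, m)`;
moving the last index to the front therefore makes `B` triangular, with diagonal
`-α, -T₁, …, -T_m`. The eigenvalues are the roots of the characteristic polynomial.
-/

namespace Matrix

variable {n l R : Type*} [Fintype n] [DecidableEq n] [Fintype l] [DecidableEq l] [CommRing R]

theorem charmatrix_kronecker_one (B : Matrix n n R) :
    charmatrix (B ⊗ₖ (1 : Matrix l l R)) = charmatrix B ⊗ₖ (1 : Matrix l l R[X]) := by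
  ext ⟨i, s⟩ ⟨j, t⟩
  by_cases hst : s = t <;> by_cases hij : i = j <;> simp [hst, hij]

theorem charpoly_kronecker_one (B : Matrix n n R) :
    (B ⊗ₖ (1 : Matrix l l R)).charpoly = B.charpoly ^ Fintype.card l := by
  rw [charpoly, charmatrix_kronecker_one, det_kronecker, det_one, one_pow, mul_one, charpoly]

theorem BlockTriangular.charpoly_of_injective {α : Type*} [LinearOrder α] {M : Matrix n n R}
    {b : n → α} (h : M.BlockTriangular b) (hb : Function.Injective b) :
    M.charpoly = ∏ i, (X - C (M i i)) :=
  letI := LinearOrder.lift' b hb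
  charpoly_of_isUpperTriangular M h

theorem exists_eq_neg_of_mem_spectrum_map {ι K L : Type*} [Fintype ι] [Field K] [Field L] {M : Matrix n n K} {c : ι → K} {k : ℕ}
    (h : M.charpoly = ∏ i, (X + C (c i)) ^ k) (f : K →+* L) {z : L}
    (hz : z ∈ spectrum L (M.map f)) : ∃ i, z = -f (c i) := by
  rw [mem_spectrum_iff_isRoot_charpoly, charpoly_map, h, IsRoot.def] at hz
  simp only [Polynomial.map_prod, Polynomial.map_pow, Polynomial.map_add, map_X, map_C, eval_prod,
    eval_pow, eval_add, eval_X, eval_C, Finset.prod_eq_zero_iff, Finset.mem_univ, true_and] at hz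
  obtain ⟨i, hi⟩ := hz
  exact ⟨i, eq_neg_of_add_eq_zero_left (eq_zero_of_pow_eq_zero hi)⟩

end Matrix

section

variable {R : Type*} [CommRing R] {m : ℕ}

def filterObserverMatrix (T : Fin m → R) (α : R) : Matrix (Fin (m + 1)) (Fin (m + 1)) R :=
  Matrix.of fun i j =>
    if i = j then (if hlt : (i : ℕ) < m then -T ⟨i, hlt⟩ else -α)
    else if hsub : (i : ℕ) = (j : ℕ) + 1 ∧ (j : ℕ) + 1 < m then
      T ⟨(j : ℕ), Nat.lt_of_succ_lt hsub.2⟩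
    else if (i : ℕ) = 0 ∧ (j : ℕ) = m then α
    else 0

theorem filterObserverMatrix_apply_self (T : Fin m → R) (α : R) (i : Fin (m + 1)) :
    filterObserverMatrix T α i i = -(Fin.snoc T α : Fin (m + 1) → R) i := by
  induction i using Fin.lastCases with
  | last => simp [filterObserverMatrix]
  | cast j => simp [filterObserverMatrix]

-- Listing the indices as `m, 0, 1, …, m - 1` makes the matrix lower triangular.
theorem filterObserverMatrix_blockTriangular (T : Fin m → R) (α : R) :
    (filterObserverMatrix T α).BlockTriangular (OrderDual.toDual ∘ finRotate (m + 1)) := by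
  intro i j hij
  replace hij : (finRotate (m + 1) i : ℕ) < finRotate (m + 1) j := hij
  rw [coe_finRotate, coe_finRotate] at hij
  have hi := i.isLt
  have hj := j.isLt
  simp only [filterObserverMatrix, Matrix.of_apply, Fin.ext_iff, Fin.val_last] at hij ⊢
  split_ifs at hij ⊢ <;> first | rfl | omega

theorem charpoly_filterObserverMatrix (T : Fin m → R) (α : R) :
    (filterObserverMatrix T α).charpoly = ∏ i, (X + C ((Fin.snoc T α : Fin (m + 1) → R) i)) := by
  rw [(filterObserverMatrix_blockTriangular T α).charpoly_of_injective
    (OrderDual.toDual.injective.comp (finRotate _).injective)]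
  simp [filterObserverMatrix_apply_self]

end

theorem stmt_9_general (p m : ℕ)
    (T : Fin m → ℝ) (hT : ∀ j, T j > 0) (α : ℝ) (hα : α > 0)
    (A : Matrix (Fin (m + 1) × Fin p) (Fin (m + 1) × Fin p) ℝ)
    (hA : A = Matrix.of fun x y =>
      (if x.2 = y.2 then (1 : ℝ) else 0) *
        (if hxy : x.1 = y.1 then
          (if hlt : (x.1 : ℕ) < m then -T ⟨x.1, hlt⟩ else -α)
        else if hsub : (x.1 : ℕ) = (y.1 : ℕ) + 1 ∧ (y.1 : ℕ) + 1 < m then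
          T ⟨(y.1 : ℕ), Nat.lt_of_succ_lt hsub.2⟩
        else if (x.1 : ℕ) = 0 ∧ (y.1 : ℕ) = m then α
        else 0)) :
    A.charpoly = (X + C α) ^ p * ∏ j : Fin m, (X + C (T j)) ^ p ∧
    ∀ z ∈ spectrum ℂ (A.map (Complex.ofReal · )),
      (z = -(α : ℂ) ∨ ∃ j : Fin m, z = -((T j : ℝ) : ℂ)) ∧ z.im = 0 ∧ z.re < 0 := by
  have hA' : A = filterObserverMatrix T α ⊗ₖ 1 := by
    subst hA
    ext ⟨i, s⟩ ⟨j, t⟩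
    simp [filterObserverMatrix, Matrix.one_apply, mul_comm]
  have hcharpoly : A.charpoly = ∏ i, (X + C ((Fin.snoc T α : Fin (m + 1) → ℝ) i)) ^ p := by
    rw [hA', Matrix.charpoly_kronecker_one, charpoly_filterObserverMatrix, Fintype.card_fin,
      Finset.prod_pow]
  refine ⟨by simp [hcharpoly, Fin.prod_univ_castSucc, mul_comm], fun z hz => ?_⟩
  obtain ⟨i, rfl⟩ := Matrix.exists_eq_neg_of_mem_spectrum_map hcharpoly Complex.ofRealHom hz
  have hpos : 0 < (Fin.snoc T α : Fin (m + 1) → ℝ) i := by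
    induction i using Fin.lastCases <;> simp [hα, hT]
  refine ⟨?_, by simp, by simpa using hpos⟩
  induction i using Fin.lastCases with
  | last => exact Or.inl (by simp)
  | cast j => exact Or.inr ⟨j, by simp⟩

/-- The block matrix `A` of the combined filter–observer error dynamics
(proof of Lemma 1): blocks are indexed by `Fin (m+1)` (0-based; block `k` for
`k < m` corresponds to filter stage `k+1`, block `m` to the observer error).
Diagonal blocks are `−T_{k+1} I_p` (`k < m`) and `−α I_p` (`k = m`);
subdiagonal blocks `(k+1, k)` for `k + 1 < m` equal `T_{k+1} I_p`;
block `(0, m)` equals `α I_p`; all other blocks vanish.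
Its characteristic polynomial is `(X+α)^p ∏_j (X+T_j)^p`, so every complex
eigenvalue lies in `{−α, −T₁,…,−T_m}` and is a negative real number. -/
theorem stmt_9 (p m : ℕ) (hp : 1 ≤ p) (hm : 1 ≤ m)
    (T : Fin m → ℝ) (hT : ∀ j, T j > 0) (α : ℝ) (hα : α > 0)
    (A : Matrix (Fin (m + 1) × Fin p) (Fin (m + 1) × Fin p) ℝ)
    (hA : A = Matrix.of fun x y =>
      (if x.2 = y.2 then (1 : ℝ) else 0) *
        (if hxy : x.1 = y.1 then
          (if hlt : (x.1 : ℕ) < m then -T ⟨x.1, hlt⟩ else -α)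
        else if hsub : (x.1 : ℕ) = (y.1 : ℕ) + 1 ∧ (y.1 : ℕ) + 1 < m then
          T ⟨(y.1 : ℕ), Nat.lt_of_succ_lt hsub.2⟩
        else if (x.1 : ℕ) = 0 ∧ (y.1 : ℕ) = m then α
        else 0)) :
    A.charpoly = (X + C α) ^ p * ∏ j : Fin m, (X + C (T j)) ^ p ∧
    ∀ z ∈ spectrum ℂ (A.map (Complex.ofReal · )),
      (z = -(α : ℂ) ∨ ∃ j : Fin m, z = -((T j : ℝ) : ℂ)) ∧ z.im = 0 ∧ z.re < 0 :=
  stmt_9_general p m T hT α hα A hA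
end

section
/- Let N ≥ 1, let A be a real N×N matrix, let γ > 0, and let P be a real symmetric positive definite N×N matrix satisfying the Lyapunov equation Aᵀ·P + P·A = −γ·I_N. Let U ≥ 0, let u : ℝ → ℝ^N satisfy ‖u(t)‖ ≤ U for all t ≥ 0, and let E : ℝ → ℝ^N be differentiable with E'(t) = A·E(t) + u(t) for all t ≥ 0. Define V(t) := ⟨E(t), P·E(t)⟩. Then: (i) V is differentiable with V'(t) = −γ·‖E(t)‖² + 2·⟨E(t), P·u(t)⟩ ≤ −γ·‖E(t)‖² + 2·‖P‖·U·‖E(t)‖ for all t ≥ 0, where ‖P‖ is the operator norm of P; and (ii) for any 0 < θ < γ, V'(t) ≤ −(γ−θ)·‖E(t)‖² + ‖P‖²·U²/θ for all t ≥ 0, and consequently E is bounded on [0,∞) with limsup_{t→∞} ‖E(t)‖² ≤ (λ_max(P)/λ_min(P))·‖P‖²·U²/(θ·(γ−θ)), where λ_max(P) and λ_min(P) denote the largest and smallest eigenvalues of P. -/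
open Filter Matrix RealInnerProductSpace

/-!
For `V = ⟪E, P E⟫`, the Lyapunov equation turns the drift part of `V'` into `-γ‖E‖²`, and the
disturbance contributes `2⟪E, P u⟫ ≤ 2‖P‖U‖E‖ ≤ θ‖E‖² + ‖P‖²U²/θ` (Cauchy–Schwarz, then Young).
Since `λ_min ‖E‖² ≤ V ≤ λ_max ‖E‖²`, this gives `V' ≤ -c V + K` with `c = (γ - θ)/λ_max` and
`K = ‖P‖²U²/θ`. Grönwall's inequality with the negative rate `-c` bounds `V(t)` by a convex
combination of `V(0)` and `K/c` that tends to `K/c`, and dividing by `λ_min` bounds `‖E‖²`.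
-/

namespace Matrix

open scoped MatrixOrder

variable {n : Type*} [Fintype n] [DecidableEq n]

lemma inner_toEuclideanCLM_le_of_le {P Q : Matrix n n ℝ} (h : P ≤ Q) (x : EuclideanSpace ℝ n) :
    ⟪x, toEuclideanCLM (𝕜 := ℝ) P x⟫ ≤ ⟪x, toEuclideanCLM (𝕜 := ℝ) Q x⟫ := by
  have := (le_iff.mp h).dotProduct_mulVec_nonneg x.ofLp
  simp only [inner_toEuclideanCLM, star_trivial, sub_mulVec, dotProduct_sub] at this ⊢
  linarith

lemma inner_toEuclideanCLM_algebraMap (c : ℝ) (x : EuclideanSpace ℝ n) :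
    ⟪x, toEuclideanCLM (𝕜 := ℝ) (algebraMap ℝ _ c) x⟫ = c * ‖x‖ ^ 2 := by
  rw [AlgHomClass.commutes, Algebra.algebraMap_eq_smul_one, _root_.smul_apply, one_apply_eq_self,
    real_inner_smul_right, real_inner_self_eq_norm_sq]

variable {P : Matrix n n ℝ}

lemma IsHermitian.iInf_eigenvalues_mul_norm_sq_le_inner (hP : P.IsHermitian)
    (x : EuclideanSpace ℝ n) :
    (⨅ i, hP.eigenvalues i) * ‖x‖ ^ 2 ≤ ⟪x, toEuclideanCLM (𝕜 := ℝ) P x⟫ := by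
  rw [← inner_toEuclideanCLM_algebraMap]
  refine inner_toEuclideanCLM_le_of_le ?_ x
  rw [algebraMap_le_iff_le_spectrum (p := IsSelfAdjoint) hP.isSelfAdjoint,
    hP.spectrum_real_eq_range_eigenvalues]
  rintro _ ⟨i, rfl⟩
  exact ciInf_le (Set.finite_range _).bddBelow i

lemma IsHermitian.inner_le_iSup_eigenvalues_mul_norm_sq (hP : P.IsHermitian)
    (x : EuclideanSpace ℝ n) :
    ⟪x, toEuclideanCLM (𝕜 := ℝ) P x⟫ ≤ (⨆ i, hP.eigenvalues i) * ‖x‖ ^ 2 := by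
  rw [← inner_toEuclideanCLM_algebraMap]
  refine inner_toEuclideanCLM_le_of_le ?_ x
  rw [le_algebraMap_iff_spectrum_le (p := IsSelfAdjoint) hP.isSelfAdjoint,
    hP.spectrum_real_eq_range_eigenvalues]
  rintro _ ⟨i, rfl⟩
  exact le_ciSup (Set.finite_range _).bddAbove i

variable [Nonempty n]

lemma PosDef.iInf_eigenvalues_pos (hP : P.PosDef) : 0 < ⨅ i, hP.1.eigenvalues i := by
  obtain ⟨i, hi⟩ := exists_eq_ciInf_of_finite (f := hP.1.eigenvalues)
  exact hi ▸ hP.eigenvalues_pos i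

lemma IsHermitian.iInf_eigenvalues_le_iSup (hP : P.IsHermitian) :
    ⨅ i, hP.eigenvalues i ≤ ⨆ i, hP.eigenvalues i :=
  ciInf_le_ciSup (Set.finite_range _).bddBelow (Set.finite_range _).bddAbove

end Matrix

section Lyapunov

variable {F : Type*} [NormedAddCommGroup F] [InnerProductSpace ℝ F] [CompleteSpace F]
  {T : F →L[ℝ] F}

lemma HasDerivAt.inner_apply_self (hT : IsSelfAdjoint T) {x : ℝ → F} {x' : F} {t : ℝ}
    (hx : HasDerivAt x x' t) :
    HasDerivAt (fun τ => ⟪x τ, T (x τ)⟫) (2 * ⟪x t, T x'⟫) t := by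
  refine (hx.inner ℝ ((T.hasFDerivAt (x := x t)).comp_hasDerivAt t hx)).congr_deriv ?_
  rw [Function.comp_apply, real_inner_comm, ← hT.isSymmetric.apply_clm]
  ring

lemma IsSelfAdjoint.two_mul_inner_apply_add_of_lyapunov (hT : IsSelfAdjoint T) {A : F →L[ℝ] F}
    {γ : ℝ} (hLyap : ContinuousLinearMap.adjoint A * T + T * A = -(γ • 1)) (v w : F) :
    2 * ⟪v, T (A v + w)⟫ = -γ * ‖v‖ ^ 2 + 2 * ⟪v, T w⟫ := by
  have hA : ⟪v, (ContinuousLinearMap.adjoint A * T + T * A) v⟫ = 2 * ⟪v, T (A v)⟫ := by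
    rw [_root_.add_apply, inner_add_right, mul_apply_eq_comp, mul_apply_eq_comp,
      ContinuousLinearMap.adjoint_inner_right, ← hT.isSymmetric.apply_clm, real_inner_comm]
    ring
  rw [hLyap] at hA
  simp only [_root_.neg_apply, _root_.smul_apply, one_apply_eq_self, inner_neg_right,
    real_inner_smul_right, real_inner_self_eq_norm_sq] at hA
  rw [map_add, inner_add_right]
  linarith

end Lyapunov

lemma real_inner_apply_le_opNorm_mul {F : Type*} [NormedAddCommGroup F] [InnerProductSpace ℝ F]
    (T : F →L[ℝ] F) (v : F) {w : F} {U : ℝ} (hw : ‖w‖ ≤ U) : ⟪v, T w⟫ ≤ ‖T‖ * U * ‖v‖ :=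
  calc ⟪v, T w⟫ ≤ ‖v‖ * ‖T w‖ := real_inner_le_norm _ _
    _ ≤ ‖v‖ * (‖T‖ * U) := by gcongr; exact T.le_of_opNorm_le_of_le le_rfl hw
    _ = ‖T‖ * U * ‖v‖ := mul_comm _ _

lemma two_mul_mul_le_mul_sq_add_sq_div {θ : ℝ} (hθ : 0 < θ) (a b : ℝ) :
    2 * (b * a) ≤ θ * a ^ 2 + b ^ 2 / θ := by
  have : θ * a ^ 2 + b ^ 2 / θ - 2 * (b * a) = (θ * a - b) ^ 2 / θ := by field_simp; ring
  rw [← sub_nonneg, this]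
  positivity

lemma le_gronwallBound_of_hasDerivAt {f f' : ℝ → ℝ} {K ε : ℝ}
    (hf : ∀ t ≥ 0, HasDerivAt f (f' t) t) (bound : ∀ t ≥ 0, f' t ≤ K * f t + ε) {t : ℝ}
    (ht : 0 ≤ t) : f t ≤ gronwallBound (f 0) K ε t := by
  simpa using le_gronwallBound_of_liminf_deriv_right_le (b := t)
    (fun s hs => (hf s hs.1).continuousAt.continuousWithinAt)
    (fun s hs _ hr => (hf s hs.1).hasDerivWithinAt.liminf_right_slope_le hr)
    le_rfl (fun s hs => bound s hs.1) t ⟨ht, le_rfl⟩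

section NegativeRate

variable {c : ℝ} (δ ε : ℝ)

lemma gronwallBound_neg_eq (hc : 0 < c) (x : ℝ) :
    gronwallBound δ (-c) ε x = δ * Real.exp (-c * x) + ε / c * (1 - Real.exp (-c * x)) := by
  rw [gronwallBound_of_K_ne_0 (neg_ne_zero.mpr hc.ne'), div_neg]
  ring

lemma gronwallBound_neg_le_max (hc : 0 < c) {x : ℝ} (hx : 0 ≤ x) :
    gronwallBound δ (-c) ε x ≤ max δ (ε / c) := by
  have he : Real.exp (-c * x) ≤ 1 := Real.exp_le_one_iff.mpr (by nlinarith)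
  rw [gronwallBound_neg_eq δ ε hc]
  calc δ * Real.exp (-c * x) + ε / c * (1 - Real.exp (-c * x))
      ≤ max δ (ε / c) * Real.exp (-c * x) + max δ (ε / c) * (1 - Real.exp (-c * x)) := by
        gcongr
        · exact le_max_left _ _
        · exact le_max_right _ _
    _ = max δ (ε / c) := by ring

lemma tendsto_gronwallBound_neg (hc : 0 < c) :
    Tendsto (gronwallBound δ (-c) ε) atTop (nhds (ε / c)) := by
  have he : Tendsto (fun x => Real.exp (-c * x)) atTop (nhds 0) :=
    Real.tendsto_exp_atBot.comp (tendsto_id.const_mul_atTop_of_neg (neg_lt_zero.mpr hc))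
  rw [funext (gronwallBound_neg_eq δ ε hc)]
  simpa using (he.const_mul δ).add ((he.const_sub 1).const_mul (ε / c))

end NegativeRate

lemma Filter.limsup_le_of_eventually_le_of_tendsto {α : Type*} {L : Filter α} [L.NeBot]
    {f g : α → ℝ} {l : ℝ} (hf : IsBoundedUnder (· ≥ ·) L f) (hfg : f ≤ᶠ[L] g)
    (hg : Tendsto g L (nhds l)) : limsup f L ≤ l :=
  hg.limsup_eq ▸ limsup_le_limsup hfg hf.isCoboundedUnder_le hg.isBoundedUnder_le

lemma exists_bound_and_limsup_norm_sq_le_of_lyapunov {F : Type*} [NormedAddCommGroup F]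
    {x : ℝ → F} {V V' : ℝ → ℝ} {m c K : ℝ} (hm : 0 < m) (hc : 0 < c)
    (hVx : ∀ t, m * ‖x t‖ ^ 2 ≤ V t) (hV : ∀ t ≥ 0, HasDerivAt V (V' t) t)
    (hV' : ∀ t ≥ 0, V' t ≤ -c * V t + K) :
    (∃ C, ∀ t ≥ 0, ‖x t‖ ≤ C) ∧ limsup (fun t => ‖x t‖ ^ 2) atTop ≤ K / c / m := by
  have hx : ∀ t ≥ 0, ‖x t‖ ^ 2 ≤ gronwallBound (V 0) (-c) K t / m := fun t ht => by
    rw [le_div_iff₀' hm]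
    exact (hVx t).trans (le_gronwallBound_of_hasDerivAt hV hV' ht)
  refine ⟨⟨√(max (V 0) (K / c) / m), fun t ht => Real.le_sqrt_of_sq_le ?_⟩, ?_⟩
  · exact (hx t ht).trans (by gcongr; exact gronwallBound_neg_le_max _ _ hc ht)
  · exact limsup_le_of_eventually_le_of_tendsto (isBoundedUnder_of ⟨0, fun t => sq_nonneg _⟩)
      ((eventually_ge_atTop 0).mono hx) ((tendsto_gronwallBound_neg _ _ hc).div_const m)

theorem stmt_10_general (N : ℕ) (hN : 1 ≤ N) (A P : Matrix (Fin N) (Fin N) ℝ)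
    (γ : ℝ) (hP : P.PosDef)
    (hLyap : Aᵀ * P + P * A = -(γ • (1 : Matrix (Fin N) (Fin N) ℝ)))
    (U : ℝ)
    (u E E' : ℝ → EuclideanSpace ℝ (Fin N))
    (hu : ∀ t : ℝ, t ≥ 0 → ‖u t‖ ≤ U)
    (hE : ∀ t : ℝ, HasDerivAt E (E' t) t)
    (hdyn : ∀ t : ℝ, t ≥ 0 → E' t = (Matrix.toEuclideanCLM (𝕜 := ℝ) A) (E t) + u t) :
    (∀ t : ℝ, t ≥ 0 →
      HasDerivAt (fun τ : ℝ => ⟪E τ, (Matrix.toEuclideanCLM (𝕜 := ℝ) P) (E τ)⟫)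
        (-γ * ‖E t‖ ^ 2 + 2 * ⟪E t, (Matrix.toEuclideanCLM (𝕜 := ℝ) P) (u t)⟫) t ∧
      -γ * ‖E t‖ ^ 2 + 2 * ⟪E t, (Matrix.toEuclideanCLM (𝕜 := ℝ) P) (u t)⟫ ≤
        -γ * ‖E t‖ ^ 2 + 2 * ‖Matrix.toEuclideanCLM (𝕜 := ℝ) P‖ * U * ‖E t‖) ∧
    (∀ θ : ℝ, 0 < θ → θ < γ →
      (∀ t : ℝ, t ≥ 0 →
        -γ * ‖E t‖ ^ 2 + 2 * ⟪E t, (Matrix.toEuclideanCLM (𝕜 := ℝ) P) (u t)⟫ ≤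
          -(γ - θ) * ‖E t‖ ^ 2 + ‖Matrix.toEuclideanCLM (𝕜 := ℝ) P‖ ^ 2 * U ^ 2 / θ) ∧
      (∃ C : ℝ, ∀ t : ℝ, t ≥ 0 → ‖E t‖ ≤ C) ∧
      Filter.limsup (fun t => ‖E t‖ ^ 2) Filter.atTop ≤
        ((⨆ i, hP.1.eigenvalues i) / (⨅ i, hP.1.eigenvalues i)) *
          ‖Matrix.toEuclideanCLM (𝕜 := ℝ) P‖ ^ 2 * U ^ 2 / (θ * (γ - θ))) := by
  have : Nonempty (Fin N) := ⟨⟨0, hN⟩⟩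
  set T := toEuclideanCLM (𝕜 := ℝ) P
  have hT : IsSelfAdjoint T := hP.1.isSelfAdjoint.map _
  have hLyapT : ContinuousLinearMap.adjoint (toEuclideanCLM (𝕜 := ℝ) A) * T
      + T * toEuclideanCLM (𝕜 := ℝ) A = -(γ • 1) := by
    have := congrArg (toEuclideanCLM (𝕜 := ℝ)) hLyap
    rwa [map_add, map_mul, map_mul, ← conjTranspose_eq_transpose_of_trivial,
      ← star_eq_conjTranspose, map_star, ContinuousLinearMap.star_eq_adjoint, map_neg, map_smul,
      map_one] at this
  have hV : ∀ t ≥ 0, HasDerivAt (fun τ => ⟪E τ, T (E τ)⟫)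
      (-γ * ‖E t‖ ^ 2 + 2 * ⟪E t, T (u t)⟫) t := fun t ht => by
    have := (hE t).inner_apply_self hT
    rwa [hdyn t ht, hT.two_mul_inner_apply_add_of_lyapunov hLyapT] at this
  have hTu : ∀ t ≥ 0, ⟪E t, T (u t)⟫ ≤ ‖T‖ * U * ‖E t‖ := fun t ht =>
    real_inner_apply_le_opNorm_mul T (E t) (hu t ht)
  refine ⟨fun t ht => ⟨hV t ht, by linarith [hTu t ht]⟩, fun θ hθ hθγ => ?_⟩
  have hV' : ∀ t ≥ 0, -γ * ‖E t‖ ^ 2 + 2 * ⟪E t, T (u t)⟫ ≤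
      -(γ - θ) * ‖E t‖ ^ 2 + ‖T‖ ^ 2 * U ^ 2 / θ := fun t ht => by
    have := two_mul_mul_le_mul_sq_add_sq_div hθ ‖E t‖ (‖T‖ * U)
    rw [mul_pow] at this
    linarith [hTu t ht]
  set lmin := ⨅ i, hP.1.eigenvalues i
  set lmax := ⨆ i, hP.1.eigenvalues i
  have hlmin : 0 < lmin := hP.iInf_eigenvalues_pos
  have hlmax : 0 < lmax := hlmin.trans_le hP.1.iInf_eigenvalues_le_iSup
  have hVdecay : ∀ t ≥ 0, -γ * ‖E t‖ ^ 2 + 2 * ⟪E t, T (u t)⟫ ≤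
      -((γ - θ) / lmax) * ⟪E t, T (E t)⟫ + ‖T‖ ^ 2 * U ^ 2 / θ := fun t ht => by
    have hVE : (γ - θ) / lmax * ⟪E t, T (E t)⟫ ≤ (γ - θ) * ‖E t‖ ^ 2 :=
      calc _ ≤ (γ - θ) / lmax * (lmax * ‖E t‖ ^ 2) := by
            gcongr
            exact hP.1.inner_le_iSup_eigenvalues_mul_norm_sq (E t)
        _ = (γ - θ) * ‖E t‖ ^ 2 := by field_simp
    linarith [hV' t ht]
  obtain ⟨hbdd, hlimsup⟩ := exists_bound_and_limsup_norm_sq_le_of_lyapunov hlmin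
    (div_pos (by linarith) hlmax) (fun t => hP.1.iInf_eigenvalues_mul_norm_sq_le_inner (E t))
    hV hVdecay
  refine ⟨hV', hbdd, hlimsup.trans_eq ?_⟩
  field_simp

/-- Quadratic-Lyapunov estimate (inequality (22) in the proof of Lemma 1):
for `E' = A E + u` with `‖u‖ ≤ U` and a symmetric positive definite `P`
solving `Aᵀ P + P A = −γ I`, the function `V = ⟨E, P E⟩` satisfies
`V' = −γ‖E‖² + 2⟨E, P u⟩ ≤ −γ‖E‖² + 2‖P‖U‖E‖`, and for any `0 < θ < γ`,
`V' ≤ −(γ−θ)‖E‖² + ‖P‖²U²/θ`, whence `E` is bounded with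
`limsup ‖E‖² ≤ (λ_max(P)/λ_min(P))·‖P‖²U²/(θ(γ−θ))`. -/
theorem stmt_10 (N : ℕ) (hN : 1 ≤ N) (A P : Matrix (Fin N) (Fin N) ℝ)
    (γ : ℝ) (hγ : γ > 0) (hP : P.PosDef)
    (hLyap : Aᵀ * P + P * A = -(γ • (1 : Matrix (Fin N) (Fin N) ℝ)))
    (U : ℝ) (hU : U ≥ 0)
    (u E E' : ℝ → EuclideanSpace ℝ (Fin N))
    (hu : ∀ t : ℝ, t ≥ 0 → ‖u t‖ ≤ U)
    (hE : ∀ t : ℝ, HasDerivAt E (E' t) t)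
    (hdyn : ∀ t : ℝ, t ≥ 0 → E' t = (Matrix.toEuclideanCLM (𝕜 := ℝ) A) (E t) + u t) :
    (∀ t : ℝ, t ≥ 0 →
      HasDerivAt (fun τ : ℝ => ⟪E τ, (Matrix.toEuclideanCLM (𝕜 := ℝ) P) (E τ)⟫)
        (-γ * ‖E t‖ ^ 2 + 2 * ⟪E t, (Matrix.toEuclideanCLM (𝕜 := ℝ) P) (u t)⟫) t ∧
      -γ * ‖E t‖ ^ 2 + 2 * ⟪E t, (Matrix.toEuclideanCLM (𝕜 := ℝ) P) (u t)⟫ ≤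
        -γ * ‖E t‖ ^ 2 + 2 * ‖Matrix.toEuclideanCLM (𝕜 := ℝ) P‖ * U * ‖E t‖) ∧
    (∀ θ : ℝ, 0 < θ → θ < γ →
      (∀ t : ℝ, t ≥ 0 →
        -γ * ‖E t‖ ^ 2 + 2 * ⟪E t, (Matrix.toEuclideanCLM (𝕜 := ℝ) P) (u t)⟫ ≤
          -(γ - θ) * ‖E t‖ ^ 2 + ‖Matrix.toEuclideanCLM (𝕜 := ℝ) P‖ ^ 2 * U ^ 2 / θ) ∧
      (∃ C : ℝ, ∀ t : ℝ, t ≥ 0 → ‖E t‖ ≤ C) ∧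
      Filter.limsup (fun t => ‖E t‖ ^ 2) Filter.atTop ≤
        ((⨆ i, hP.1.eigenvalues i) / (⨅ i, hP.1.eigenvalues i)) *
          ‖Matrix.toEuclideanCLM (𝕜 := ℝ) P‖ ^ 2 * U ^ 2 / (θ * (γ - θ))) :=
  stmt_10_general N hN A P γ hP hLyap U u E E' hu hE hdyn
end

section
/- Let p ≥ 1, write ℝ^p for EuclideanSpace ℝ (Fin p). Let e : ℝ → ℝ^p and ρ : ℝ → ℝ be continuous with ρ(t) > 0 for all t ≥ 0, suppose ‖e(0)‖ < ρ(0), and let M ≥ 0. Assume that for every t ≥ 0 the following implication holds: if ‖e(s)‖ < ρ(s) for all s ∈ [0, t], then log(ρ(t)²/(ρ(t)² − ‖e(t)‖²)) ≤ M. Then for all t ≥ 0 one has ‖e(t)‖² ≤ ρ(t)²·(1 − exp(−M)); in particular ‖e(t)‖ < ρ(t) for all t ≥ 0. -/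
/-!
With `c = 1 - exp (-M) < 1`, the barrier bound `log (ρ² / (ρ² - ‖e‖²)) ≤ M` is equivalent to
`‖e‖² ≤ c ρ²`, which keeps `‖e‖` a fixed fraction away from the funnel boundary `ρ`. If the
trajectory left the open funnel, look at the first exit time `T > 0`: the bound holds on `[0, T)`,
hence at `T` by continuity, so `e(T)` is still strictly inside the funnel, a contradiction.
-/

open Set

theorem Ici_subset_of_isOpen_of_Ico_subset {α : Type*} [ConditionallyCompleteLinearOrder α]
    [TopologicalSpace α] [OrderTopology α] {U : Set α} {a : α} (hU : IsOpen U) (ha : a ∈ U)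
    (step : ∀ t, a < t → Ico a t ⊆ U → t ∈ U) : Ici a ⊆ U := by
  by_contra hsub
  obtain ⟨t, ht⟩ := not_subset.1 hsub
  set B := Ici a \ U
  have hB : IsClosed B := isClosed_Ici.sdiff hU
  have hbdd : BddBelow B := ⟨a, fun _ hx => hx.1⟩
  have hexit : sInf B ∈ B := hB.csInf_mem ⟨t, ht⟩ hbdd
  have hpos : a < sInf B := hexit.1.lt_of_ne fun h => hexit.2 (h ▸ ha)
  refine hexit.2 (step _ hpos fun s hs => ?_)
  by_contra hsU
  exact (csInf_le hbdd ⟨hs.1, hsU⟩).not_gt hs.2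

theorem le_mul_one_sub_exp_neg_of_log_div_sub_le {a b M : ℝ} (hb : 0 ≤ b) (hba : b < a)
    (hlog : Real.log (a / (a - b)) ≤ M) : b ≤ a * (1 - Real.exp (-M)) := by
  have hsub : 0 < a - b := sub_pos.2 hba
  have hratio : a / (a - b) ≤ Real.exp M := by
    rw [← Real.exp_log (div_pos (hb.trans_lt hba) hsub)]
    exact Real.exp_le_exp.2 hlog
  have hexp : a * Real.exp (-M) ≤ a - b := by
    rw [Real.exp_neg, ← div_eq_mul_inv, div_le_iff₀ (Real.exp_pos M), mul_comm]
    exact (div_le_iff₀ hsub).1 hratio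
  linarith

theorem stmt_13_general (p : ℕ)
    (e : ℝ → EuclideanSpace ℝ (Fin p)) (ρ : ℝ → ℝ)
    (he : Continuous e) (hρ : Continuous ρ)
    (hρpos : ∀ t : ℝ, t ≥ 0 → ρ t > 0)
    (h0 : ‖e 0‖ < ρ 0) (M : ℝ)
    (himp : ∀ t : ℝ, t ≥ 0 → (∀ s ∈ Set.Icc (0 : ℝ) t, ‖e s‖ < ρ s) →
      Real.log ((ρ t) ^ 2 / ((ρ t) ^ 2 - ‖e t‖ ^ 2)) ≤ M) :
    ∀ t : ℝ, t ≥ 0 →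
      ‖e t‖ ^ 2 ≤ (ρ t) ^ 2 * (1 - Real.exp (-M)) ∧ ‖e t‖ < ρ t := by
  have bound : ∀ t ≥ 0, (∀ s ∈ Icc 0 t, ‖e s‖ < ρ s) →
      ‖e t‖ ^ 2 ≤ (ρ t) ^ 2 * (1 - Real.exp (-M)) := fun t ht hfun =>
    le_mul_one_sub_exp_neg_of_log_div_sub_le (by positivity)
      (pow_lt_pow_left₀ (hfun t ⟨ht, le_rfl⟩) (norm_nonneg _) two_ne_zero) (himp t ht hfun)
  have funnel : Ici 0 ⊆ {t | ‖e t‖ < ρ t} := by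
    refine Ici_subset_of_isOpen_of_Ico_subset (isOpen_lt he.norm hρ) h0 fun t ht hIco => ?_
    have hbound_t : ‖e t‖ ^ 2 ≤ (ρ t) ^ 2 * (1 - Real.exp (-M)) := by
      refine ContinuousWithinAt.closure_le (s := Ico 0 t) (by simp [closure_Ico ht.ne, ht.le])
        (he.norm.pow 2).continuousWithinAt ((hρ.pow 2).mul continuous_const).continuousWithinAt
        fun s hs => bound s hs.1 fun u hu => hIco ⟨hu.1, hu.2.trans_lt hs.2⟩
    have hρt := hρpos t ht.le
    exact lt_of_pow_lt_pow_left₀ 2 hρt.le <| hbound_t.trans_lt <|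
      mul_lt_of_lt_one_right (by positivity) (sub_lt_self 1 (Real.exp_pos (-M)))
  intro t ht
  exact ⟨bound t ht fun s hs => funnel hs.1, funnel ht⟩

/-- Barrier-Lyapunov-function invariance principle (Tee–Ge–Tay): if along the
trajectory the barrier term `log(ρ²/(ρ² − ‖e‖²))` is bounded by `M` as long as
the funnel constraint `‖e‖ < ρ` has held so far, and it holds initially, then
`‖e(t)‖² ≤ ρ(t)²(1 − exp(−M))` and in particular `‖e(t)‖ < ρ(t)` for all `t ≥ 0`. -/
theorem stmt_13 (p : ℕ) (hp : 1 ≤ p)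
    (e : ℝ → EuclideanSpace ℝ (Fin p)) (ρ : ℝ → ℝ)
    (he : Continuous e) (hρ : Continuous ρ)
    (hρpos : ∀ t : ℝ, t ≥ 0 → ρ t > 0)
    (h0 : ‖e 0‖ < ρ 0) (M : ℝ) (hM : M ≥ 0)
    (himp : ∀ t : ℝ, t ≥ 0 → (∀ s ∈ Set.Icc (0 : ℝ) t, ‖e s‖ < ρ s) →
      Real.log ((ρ t) ^ 2 / ((ρ t) ^ 2 - ‖e t‖ ^ 2)) ≤ M) :
    ∀ t : ℝ, t ≥ 0 →
      ‖e t‖ ^ 2 ≤ (ρ t) ^ 2 * (1 - Real.exp (-M)) ∧ ‖e t‖ < ρ t :=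
  stmt_13_general p e ρ he hρ hρpos h0 M himp
end
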